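/- Under the variable–variable block of covariance evolution with its initial conditions, for all k, s ∈ L and all y ∈ (0,1] the quantity U^{(l_k;l_s)} := δ^{l_k,l_k}/(k l̂_k)² − δ^{l_s,l_s}/(s l̂_s)² satisfies U^{(l_k;l_s)} = −(ε y^k − 1)/(k l̂_k) + (ε y^s − 1)/(s l̂_s) + (2ε/e)[(y^k − 1)/k − (y^s − 1)/s]. (Lemma 1, equation (11).) -/

import Mathlib

open Finset

namespace LDPC

/-- λ(y) = Σ_{k∈L} λ_k y^{k-1} -/
noncomputable def lamP (L : Finset ℕ) (lam : ℕ → ℝ) (y : ℝ) : ℝ :=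
  ∑ k ∈ L, lam k * y ^ (k - 1)

/-- λ'(y) = Σ_{k∈L} (k-1) λ_k y^{k-2} -/
noncomputable def lamD (L : Finset ℕ) (lam : ℕ → ℝ) (y : ℝ) : ℝ :=
  ∑ k ∈ L, ((k : ℝ) - 1) * lam k * y ^ (k - 2)

/-- λ''(y) = Σ_{k∈L} (k-1)(k-2) λ_k y^{k-3} -/
noncomputable def lamDD (L : Finset ℕ) (lam : ℕ → ℝ) (y : ℝ) : ℝ :=
  ∑ k ∈ L, ((k : ℝ) - 1) * ((k : ℝ) - 2) * lam k * y ^ (k - 3)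

/-- ρ(z) = Σ_{k∈R} ρ_k z^{k-1} -/
noncomputable def rhoP (R : Finset ℕ) (rho : ℕ → ℝ) (z : ℝ) : ℝ :=
  ∑ k ∈ R, rho k * z ^ (k - 1)

/-- ρ'(z) = Σ_{k∈R} (k-1) ρ_k z^{k-2} -/
noncomputable def rhoD (R : Finset ℕ) (rho : ℕ → ℝ) (z : ℝ) : ℝ :=
  ∑ k ∈ R, ((k : ℝ) - 1) * rho k * z ^ (k - 2)

/-- x = ελ(y) -/
noncomputable def xF (L : Finset ℕ) (lam : ℕ → ℝ) (ε y : ℝ) : ℝ := ε * lamP L lam y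

/-- x' = ελ'(y) -/
noncomputable def xD (L : Finset ℕ) (lam : ℕ → ℝ) (ε y : ℝ) : ℝ := ε * lamD L lam y

/-- x'' = ελ''(y) -/
noncomputable def xDD (L : Finset ℕ) (lam : ℕ → ℝ) (ε y : ℝ) : ℝ := ε * lamDD L lam y

/-- e = xy -/
noncomputable def eF (L : Finset ℕ) (lam : ℕ → ℝ) (ε y : ℝ) : ℝ := xF L lam ε y * y

/-- a = (x'y + x)/x -/
noncomputable def aF (L : Finset ℕ) (lam : ℕ → ℝ) (ε y : ℝ) : ℝ :=
  (xD L lam ε y * y + xF L lam ε y) / xF L lam ε y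

/-- l̂_k(y) = ε λ_k y^k -/
noncomputable def lhat (lam : ℕ → ℝ) (ε : ℝ) (k : ℕ) (y : ℝ) : ℝ := ε * lam k * y ^ k

/-- r̂_j(y); for j = 1 the special formula x(y-1+ρ(1-x)), else Σ_{i∈R} ρ_i C(i-1,j-1) x^j (1-x)^{i-j}. -/
noncomputable def rhat (L R : Finset ℕ) (lam rho : ℕ → ℝ) (ε : ℝ) (j : ℕ) (y : ℝ) : ℝ :=
  if j = 1 then xF L lam ε y * (y - 1 + rhoP R rho (1 - xF L lam ε y))
  else ∑ i ∈ R, rho i * ((i - 1).choose (j - 1) : ℝ) * xF L lam ε y ^ j *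
    (1 - xF L lam ε y) ^ (i - j)

/-- G_j(y) = j(r̂_{j+1} - r̂_j)/x for j ≤ d_c - 1, and G_{d_c}(y) = -d_c r̂_{d_c}/x. -/
noncomputable def Gf (L R : Finset ℕ) (lam rho : ℕ → ℝ) (ε : ℝ) (dc j : ℕ) (y : ℝ) : ℝ :=
  if j = dc then -((dc : ℝ) * rhat L R lam rho ε dc y) / xF L lam ε y
  else (j : ℝ) * (rhat L R lam rho ε (j + 1) y - rhat L R lam rho ε j y) / xF L lam ε y

/-- F(y) = Σ_{k∈L} (λ_k/k)[ε²(y^k-1)² + ε(y^k-1)] -/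
noncomputable def Ff (L : Finset ℕ) (lam : ℕ → ℝ) (ε y : ℝ) : ℝ :=
  ∑ k ∈ L, lam k / (k : ℝ) * (ε ^ 2 * (y ^ k - 1) ^ 2 + ε * (y ^ k - 1))

/-- F'(y) = 2Σ_{k∈L} ε²λ_k y^{2k-1} - (ε - ε̃)x -/
noncomputable def Fd (L : Finset ℕ) (lam : ℕ → ℝ) (ε y : ℝ) : ℝ :=
  2 * ∑ k ∈ L, ε ^ 2 * lam k * y ^ (2 * k - 1) - (ε - (1 - ε)) * xF L lam ε y

/-- V_{i,j}(y) = Σ_{s∈R} sρ_s C(s-1,i-1)C(s-1,j-1) x^{i+j} (1-x)^{2s-i-j} -/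
noncomputable def Vf (L R : Finset ℕ) (lam rho : ℕ → ℝ) (ε : ℝ) (i j : ℕ) (y : ℝ) : ℝ :=
  ∑ s ∈ R, (s : ℝ) * rho s * ((s - 1).choose (i - 1) : ℝ) * ((s - 1).choose (j - 1) : ℝ) *
    xF L lam ε y ^ (i + j) * (1 - xF L lam ε y) ^ (2 * s - i - j)

/-- The variable–variable block of covariance evolution, with its initial conditions. -/
def CEvv (L : Finset ℕ) (lam : ℕ → ℝ) (ε : ℝ) (δll : ℕ → ℕ → ℝ → ℝ) : Prop :=
  (∀ k ∈ L, ∀ s ∈ L, ∀ y ∈ Set.Ioc (0 : ℝ) 1,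
    HasDerivWithinAt (δll k s)
      (-(xF L lam ε y) *
          (((s : ℝ) * lhat lam ε s y / eF L lam ε y ^ 2) * ∑ t ∈ L, δll k t y
            + ((k : ℝ) * lhat lam ε k y / eF L lam ε y ^ 2) * ∑ t ∈ L, δll s t y
            - (((k : ℝ) + (s : ℝ)) / eF L lam ε y) * δll k s y)
        - xF L lam ε y * (k : ℝ) * (s : ℝ) * (lhat lam ε k y / eF L lam ε y) *
            ((if k = s then (1 : ℝ) else 0) - lhat lam ε s y / eF L lam ε y))
      (Set.Ioc 0 1) y)
  ∧ ∀ k ∈ L, ∀ s ∈ L,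
      δll k s 1 = (if k = s then (1 : ℝ) else 0) * (k : ℝ) * lam k * ε * (1 - ε)

/-- The variable–check block of covariance evolution, with its initial conditions. -/
def CEvc (L R : Finset ℕ) (lam rho : ℕ → ℝ) (ε : ℝ) (dc : ℕ)
    (δll δlr : ℕ → ℕ → ℝ → ℝ) : Prop :=
  (∀ k ∈ L, ∀ j ∈ Finset.Icc 1 (dc - 1), ∀ y ∈ Set.Ioc (0 : ℝ) 1,
    HasDerivWithinAt (δlr k j)
      (2 * (xD L lam ε y / eF L lam ε y) * Gf L R lam rho ε dc j y * ∑ t ∈ L, δll k t y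
        - (Gf L R lam rho ε dc j y / y ^ 2) * ∑ i ∈ L, ((i : ℝ) - 1) * δll k i y
        - xF L lam ε y * (aF L lam ε y - (k : ℝ)) * ((k : ℝ) * lhat lam ε k y / eF L lam ε y)
            * (Gf L R lam rho ε dc j y / y)
        - ((k : ℝ) * lhat lam ε k y / (eF L lam ε y * y)) * ∑ t ∈ L, δlr t j y
        + ((k : ℝ) / y) * δlr k j y
        - (j : ℝ) * (xD L lam ε y / xF L lam ε y) *
            ((if j + 1 = dc then
                (∑ t ∈ L, δll k t y) - ∑ j' ∈ Finset.Icc 1 (dc - 1), δlr k j' y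
              else δlr k (j + 1) y) - δlr k j y))
      (Set.Ioc 0 1) y)
  ∧ ∀ k ∈ L, ∀ j ∈ Finset.Icc 1 (dc - 1),
      δlr k j 1 = -((k : ℝ) * lam k * ε * (1 - ε)) * Gf L R lam rho ε dc j 1

/-- The check–check block of covariance evolution, with symmetry and initial conditions. -/
def CErr (L R : Finset ℕ) (lam rho : ℕ → ℝ) (ε : ℝ) (dc : ℕ)
    (δlr δrr : ℕ → ℕ → ℝ → ℝ) : Prop :=
  (∀ i ∈ Finset.Icc 1 (dc - 1), ∀ j ∈ Finset.Icc 1 (dc - 1), ∀ y ∈ Set.Ioc (0 : ℝ) 1,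
      δrr i j y = δrr j i y)
  ∧ (∀ i ∈ Finset.Icc 1 (dc - 1), ∀ j ∈ Finset.Icc 1 (dc - 1), ∀ y ∈ Set.Ioc (0 : ℝ) 1,
    HasDerivWithinAt (δrr i j)
      (-(xD L lam ε y / xF L lam ε y) *
          ((i : ℝ) * (if i + 1 = dc then
                (∑ k ∈ L, δlr k j y) - ∑ i' ∈ Finset.Icc 1 (dc - 1), δrr i' j y
              else δrr (i + 1) j y)
            + (j : ℝ) * (if j + 1 = dc then
                (∑ k ∈ L, δlr k i y) - ∑ i' ∈ Finset.Icc 1 (dc - 1), δrr i' i y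
              else δrr (j + 1) i y)
            - ((i : ℝ) + (j : ℝ)) * δrr i j y)
        + (∑ k ∈ L, ((2 * aF L lam ε y - (k : ℝ) - 1) / y ^ 2) *
            (δlr k j y * Gf L R lam rho ε dc i y + δlr k i y * Gf L R lam rho ε dc j y))
        - xF L lam ε y *
            (((xDD L lam ε y * xF L lam ε y - xD L lam ε y ^ 2) / xF L lam ε y ^ 2) *
                Gf L R lam rho ε dc i y * Gf L R lam rho ε dc j y
              + (i : ℝ) * (j : ℝ) * (xD L lam ε y / xF L lam ε y ^ 2) *
                  ((if i = j then rhat L R lam rho ε (j + 1) y + rhat L R lam rho ε j y else 0)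
                    - (if i = j + 1 then rhat L R lam rho ε i y else 0)
                    - (if j = i + 1 then rhat L R lam rho ε j y else 0))))
      (Set.Ioc 0 1) y)
  ∧ ∀ i ∈ Finset.Icc 1 (dc - 1), ∀ j ∈ Finset.Icc 1 (dc - 1),
      δrr i j 1 = (if i = j then (i : ℝ) * rhat L R lam rho ε i 1 else 0)
        - Vf L R lam rho ε i j 1
        + (∑ k ∈ L, ((k : ℝ) - 1) * lam k) * ε * (1 - ε) *
            Gf L R lam rho ε dc i 1 * Gf L R lam rho ε dc j 1


/-!
The variable–variable block is a linear ODE for the matrix `(δ^{l_k,l_s})_{k,s ∈ L}`. Since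
`x / e = 1 / y` and `0 < l̂_k ≤ e`, its coefficients are bounded on `[y₀, 1]` for every `y₀ > 0`,
so by Grönwall it has at most one solution with the prescribed value at `y = 1`. An explicit
solution is `δ^{l_k,l_s} = 1_{k=s} k l̂_k (1 - ε y^k) + k l̂_k s l̂_s (Q + e G_k + e G_s) / e²` with
`G_k = -log y + ε (y^k - 1) / k` and an explicit `Q` vanishing at `y = 1`. For it
`δ^{l_k,l_k} / (k l̂_k)² = (1 - ε y^k) / (k l̂_k) + (Q + 2 e G_k) / e²`, and `Q` cancels in the
difference.
-/
section PairField

variable {ι : Type*} [Fintype ι]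

def pairField (a b : ι → ℝ) (X : ι × ι → ℝ) : ι × ι → ℝ := fun p =>
  a p.2 * ∑ t, X (p.1, t) + a p.1 * ∑ t, X (p.2, t) - (b p.1 + b p.2) * X p

lemma pairField_sub (a b : ι → ℝ) (X Y : ι × ι → ℝ) :
    pairField a b X - pairField a b Y = pairField a b (X - Y) := by
  ext p
  simp only [pairField, Pi.sub_apply, Finset.sum_sub_distrib]
  ring

lemma abs_sum_row_le (X : ι × ι → ℝ) (i : ι) :
    |∑ t, X (i, t)| ≤ Fintype.card ι * ‖X‖ :=
  (Finset.abs_sum_le_sum_abs _ _).trans <| by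
    simpa using Finset.sum_le_card_nsmul Finset.univ _ ‖X‖ fun t _ => norm_le_pi_norm X (i, t)

lemma norm_pairField_le {a b : ι → ℝ} {A B : ℝ} (hA : 0 ≤ A) (hB : 0 ≤ B)
    (ha : ∀ i, |a i| ≤ A) (hb : ∀ i, |b i| ≤ B) (X : ι × ι → ℝ) :
    ‖pairField a b X‖ ≤ (2 * Fintype.card ι * A + 2 * B) * ‖X‖ := by
  refine (pi_norm_le_iff_of_nonneg (by positivity)).2 fun ⟨i, j⟩ => ?_
  rw [Real.norm_eq_abs]
  calc |pairField a b X (i, j)|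
      ≤ |a j * ∑ t, X (i, t) + a i * ∑ t, X (j, t)| + |(b i + b j) * X (i, j)| :=
        abs_sub _ _
    _ ≤ |a j| * |∑ t, X (i, t)| + |a i| * |∑ t, X (j, t)| + (|b i| + |b j|) * |X (i, j)| := by
        rw [abs_mul (b i + b j)]
        refine add_le_add ((abs_add_le _ _).trans_eq (by rw [abs_mul, abs_mul])) ?_
        exact mul_le_mul_of_nonneg_right (abs_add_le _ _) (abs_nonneg _)
    _ ≤ A * (Fintype.card ι * ‖X‖) + A * (Fintype.card ι * ‖X‖) + (B + B) * ‖X‖ := by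
        gcongr
        exacts [ha j, abs_sum_row_le X i, ha i, abs_sum_row_le X j, hb i, hb j,
          norm_le_pi_norm X (i, j)]
    _ = (2 * Fintype.card ι * A + 2 * B) * ‖X‖ := by ring

lemma lipschitzWith_pairField_add {a b : ι → ℝ} {A B : ℝ} (hA : 0 ≤ A) (hB : 0 ≤ B)
    (ha : ∀ i, |a i| ≤ A) (hb : ∀ i, |b i| ≤ B) (c : ι × ι → ℝ) :
    LipschitzWith (2 * Fintype.card ι * A + 2 * B).toNNReal (fun X => pairField a b X + c) := by
  refine LipschitzWith.of_dist_le_mul fun X Y => ?_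
  rw [dist_eq_norm, dist_eq_norm, add_sub_add_right_eq_sub, pairField_sub,
    Real.coe_toNNReal _ (by positivity)]
  exact norm_pairField_le hA hB ha hb _

end PairField

section CovarianceEvolution

variable {L : Finset ℕ} {lam : ℕ → ℝ} {ε : ℝ}

lemma lhat_pos {k : ℕ} (hlam : 0 < lam k) (hε : 0 < ε) {y : ℝ} (hy : 0 < y) :
    0 < lhat lam ε k y := by
  unfold lhat; positivity

lemma xF_eq_eF_div {y : ℝ} (hy : y ≠ 0) : xF L lam ε y = eF L lam ε y / y := by
  rw [eF, mul_div_cancel_right₀ _ hy]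

lemma eF_eq_sum_lhat (hL0 : 0 ∉ L) : eF L lam ε = fun y => ∑ t ∈ L, lhat lam ε t y := by
  funext y
  rw [eF, xF, lamP, Finset.mul_sum, Finset.sum_mul]
  refine Finset.sum_congr rfl fun t ht => ?_
  obtain ⟨n, rfl⟩ := Nat.exists_eq_succ_of_ne_zero (ne_of_mem_of_not_mem ht hL0)
  rw [lhat, pow_succ, Nat.succ_sub_one]
  ring

lemma lhat_le_eF (hL0 : 0 ∉ L) (hlamPos : ∀ t ∈ L, 0 < lam t) (hε : 0 < ε) {y : ℝ}
    (hy : 0 < y) {k : ℕ} (hk : k ∈ L) : lhat lam ε k y ≤ eF L lam ε y := by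
  rw [eF_eq_sum_lhat hL0]
  exact Finset.single_le_sum (fun t ht => (lhat_pos (hlamPos t ht) hε hy).le) hk

lemma eF_pos (hL0 : 0 ∉ L) (hlamPos : ∀ t ∈ L, 0 < lam t) (hε : 0 < ε) {y : ℝ}
    (hy : 0 < y) (hL : L.Nonempty) : 0 < eF L lam ε y := by
  rw [eF_eq_sum_lhat hL0]
  exact Finset.sum_pos (fun t ht => lhat_pos (hlamPos t ht) hε hy) hL

noncomputable def vvField (L : Finset ℕ) (lam : ℕ → ℝ) (ε y : ℝ) (X : L × L → ℝ) : L × L → ℝ :=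
  pairField (fun i : L => -(xF L lam ε y * ((i : ℝ) * lhat lam ε i y / eF L lam ε y ^ 2)))
      (fun i : L => -(xF L lam ε y * ((i : ℝ) / eF L lam ε y))) X
    + fun p => -(xF L lam ε y * (p.1 : ℝ) * (p.2 : ℝ) * (lhat lam ε p.1 y / eF L lam ε y) *
        ((if (p.1 : ℕ) = p.2 then (1 : ℝ) else 0) - lhat lam ε p.2 y / eF L lam ε y))

lemma CEvv.hasDerivWithinAt_vvField {δ : ℕ → ℕ → ℝ → ℝ} (h : CEvv L lam ε δ) {y : ℝ}
    (hy : y ∈ Set.Ioc 0 1) :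
    HasDerivWithinAt (fun y (p : L × L) => δ p.1 p.2 y)
      (vvField L lam ε y fun p => δ p.1 p.2 y) (Set.Ioc 0 1) y := by
  refine hasDerivWithinAt_pi.2 fun p => (h.1 p.1 p.1.2 p.2 p.2.2 y hy).congr_deriv ?_
  simp only [vvField, pairField, Pi.add_apply]
  rw [Finset.sum_coe_sort L (δ p.1 · y), Finset.sum_coe_sort L (δ p.2 · y)]
  ring

lemma abs_vvField_coeff_le (hL0 : 0 ∉ L) (hlamPos : ∀ t ∈ L, 0 < lam t) (hε : 0 < ε)
    {y₀ y : ℝ} (hy₀ : 0 < y₀) (hy : y₀ ≤ y) {i : ℕ} (hi : i ∈ L) :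
    |xF L lam ε y * ((i : ℝ) * lhat lam ε i y / eF L lam ε y ^ 2)| ≤ (∑ t ∈ L, (t : ℝ)) / y₀ ∧
      |xF L lam ε y * ((i : ℝ) / eF L lam ε y)| ≤ (∑ t ∈ L, (t : ℝ)) / y₀ := by
  have hy0 : 0 < y := hy₀.trans_le hy
  have he := eF_pos hL0 hlamPos hε hy0 ⟨i, hi⟩
  have hl := lhat_pos (hlamPos i hi) hε hy0
  have hiM : (i : ℝ) / y ≤ (∑ t ∈ L, (t : ℝ)) / y₀ :=
    div_le_div₀ (by positivity) (Finset.single_le_sum (fun t _ => t.cast_nonneg) hi) hy₀ hy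
  rw [xF_eq_eF_div hy0.ne']
  constructor
  · rw [show eF L lam ε y / y * (i * lhat lam ε i y / eF L lam ε y ^ 2)
        = i / y * (lhat lam ε i y / eF L lam ε y) by field_simp, abs_of_nonneg (by positivity)]
    refine le_trans (mul_le_of_le_one_right (by positivity) ?_) hiM
    exact (div_le_one he).2 (lhat_le_eF hL0 hlamPos hε hy0 hi)
  · rwa [show eF L lam ε y / y * (i / eF L lam ε y) = i / y by field_simp,
      abs_of_nonneg (by positivity)]

lemma lipschitzWith_vvField (hL0 : 0 ∉ L) (hlamPos : ∀ t ∈ L, 0 < lam t) (hε : 0 < ε)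
    {y₀ y : ℝ} (hy₀ : 0 < y₀) (hy : y₀ ≤ y) :
    LipschitzWith (2 * Fintype.card L * ((∑ t ∈ L, (t : ℝ)) / y₀)
      + 2 * ((∑ t ∈ L, (t : ℝ)) / y₀)).toNNReal (vvField L lam ε y) := by
  have hM : 0 ≤ (∑ t ∈ L, (t : ℝ)) / y₀ := by positivity
  exact lipschitzWith_pairField_add hM hM
    (fun i => (abs_neg _).trans_le (abs_vvField_coeff_le hL0 hlamPos hε hy₀ hy i.2).1)
    (fun i => (abs_neg _).trans_le (abs_vvField_coeff_le hL0 hlamPos hε hy₀ hy i.2).2) _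

theorem CEvv.unique (hL0 : 0 ∉ L) (hlamPos : ∀ t ∈ L, 0 < lam t) (hε : 0 < ε)
    {f g : ℕ → ℕ → ℝ → ℝ} (hf : CEvv L lam ε f) (hg : CEvv L lam ε g) {k s : ℕ} (hk : k ∈ L)
    (hs : s ∈ L) {y : ℝ} (hy : y ∈ Set.Ioc 0 1) : f k s y = g k s y := by
  have hsub : Set.Icc y 1 ⊆ Set.Ioc 0 1 := fun t ht => ⟨hy.1.trans_le ht.1, ht.2⟩
  have hsol : ∀ δ, CEvv L lam ε δ →
      ContinuousOn (fun y (p : L × L) => δ p.1 p.2 y) (Set.Icc y 1) ∧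
      ∀ t ∈ Set.Ioc y 1, HasDerivWithinAt (fun y (p : L × L) => δ p.1 p.2 y)
        (vvField L lam ε t fun p => δ p.1 p.2 t) (Set.Iic t) t := by
    intro δ hδ
    refine ⟨fun t ht => (hδ.hasDerivWithinAt_vvField (hsub ht)).continuousWithinAt.mono hsub,
      fun t ht => ?_⟩
    refine (hδ.hasDerivWithinAt_vvField (hsub (Set.Ioc_subset_Icc_self ht))).mono_of_mem_nhdsWithin
      (Filter.mem_of_superset (Ioc_mem_nhdsLE (hy.1.trans ht.1)) (Set.Ioc_subset_Ioc_right ht.2))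
  have hEq := ODE_solution_unique_of_mem_Icc_left (s := fun _ => Set.univ)
    (fun t ht => (lipschitzWith_vvField hL0 hlamPos hε hy.1 ht.1.le).lipschitzOnWith)
    (hsol f hf).1 (hsol f hf).2 (fun _ _ => trivial) (hsol g hg).1 (hsol g hg).2
    (fun _ _ => trivial) (funext fun p => by rw [hf.2 _ p.1.2 _ p.2.2, hg.2 _ p.1.2 _ p.2.2])
  exact congrFun (hEq ⟨le_rfl, hy.2⟩) (⟨k, hk⟩, ⟨s, hs⟩)

lemma hasDerivAt_pow_div (k : ℕ) {y : ℝ} (hy : y ≠ 0) :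
    HasDerivAt (· ^ k) ((k : ℝ) * y ^ k / y) y := by
  refine (hasDerivAt_pow k y).congr_deriv ?_
  rcases k with _ | n
  · simp
  · rw [pow_succ, Nat.add_sub_cancel, mul_div_assoc, mul_div_cancel_right₀ _ hy]

lemma hasDerivAt_lhat (k : ℕ) {y : ℝ} (hy : y ≠ 0) :
    HasDerivAt (lhat lam ε k) ((k : ℝ) * lhat lam ε k y / y) y :=
  ((hasDerivAt_pow_div k hy).const_mul (ε * lam k)).congr_deriv (by rw [lhat]; ring)

noncomputable def lhatMoment (L : Finset ℕ) (lam : ℕ → ℝ) (ε y : ℝ) : ℝ :=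
  ∑ t ∈ L, (t : ℝ) * lhat lam ε t y

noncomputable def lhatPowSum (L : Finset ℕ) (lam : ℕ → ℝ) (ε y : ℝ) : ℝ :=
  ∑ t ∈ L, lhat lam ε t y * y ^ t

lemma hasDerivAt_eF (hL0 : 0 ∉ L) {y : ℝ} (hy : y ≠ 0) :
    HasDerivAt (eF L lam ε) (lhatMoment L lam ε y / y) y := by
  rw [eF_eq_sum_lhat hL0, lhatMoment, Finset.sum_div]
  exact HasDerivAt.fun_sum fun t _ => hasDerivAt_lhat t hy

noncomputable def logCorr (ε : ℝ) (k : ℕ) (y : ℝ) : ℝ := -Real.log y + ε * (y ^ k - 1) / k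

lemma hasDerivAt_logCorr {k : ℕ} (hk : k ≠ 0) {y : ℝ} (hy : 0 < y) :
    HasDerivAt (logCorr ε k) ((ε * y ^ k - 1) / y) y := by
  refine ((Real.hasDerivAt_log hy.ne').neg.add
    ((((hasDerivAt_pow_div k hy.ne').sub_const 1).const_mul ε).div_const (k : ℝ))).congr_deriv ?_
  have : (k : ℝ) ≠ 0 := Nat.cast_ne_zero.2 hk
  field_simp
  ring

lemma logCorr_one (k : ℕ) : logCorr ε k 1 = 0 := by simp [logCorr]

noncomputable def vvQ (L : Finset ℕ) (lam : ℕ → ℝ) (ε y : ℝ) : ℝ :=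
  2 * eF L lam ε y * Real.log y
    + ∑ t ∈ L, ((2 * ε - 1 - ε * y ^ t) * lhat lam ε t y + ε * (1 - ε) * lam t) / t

lemma vvQ_one : vvQ L lam ε 1 = 0 := by
  simp only [vvQ, Real.log_one, mul_zero, zero_add, one_pow, lhat]
  exact Finset.sum_eq_zero fun t _ => by ring

lemma hasDerivAt_vvQ (hL0 : 0 ∉ L) {y : ℝ} (hy : 0 < y) :
    HasDerivAt (vvQ L lam ε)
      ((2 * lhatMoment L lam ε y * Real.log y + (1 + 2 * ε) * eF L lam ε y
        - 2 * ε * lhatPowSum L lam ε y) / y) y := by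
  have hterm : ∀ t ∈ L, HasDerivAt
      (fun y => ((2 * ε - 1 - ε * y ^ t) * lhat lam ε t y + ε * (1 - ε) * lam t) / t)
      (((2 * ε - 1) * lhat lam ε t y - 2 * ε * (lhat lam ε t y * y ^ t)) / y) y := by
    intro t ht
    have ht0 : (t : ℝ) ≠ 0 := Nat.cast_ne_zero.2 (ne_of_mem_of_not_mem ht hL0)
    refine (((((hasDerivAt_pow_div t hy.ne').const_mul ε).const_sub (2 * ε - 1)).mul
      (hasDerivAt_lhat t hy.ne')).add_const _).div_const _ |>.congr_deriv ?_
    field_simp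
    ring
  refine ((((hasDerivAt_eF hL0 hy.ne').const_mul 2).mul (Real.hasDerivAt_log hy.ne')).add
    (HasDerivAt.fun_sum hterm)).congr_deriv ?_
  rw [← Finset.sum_div, Finset.sum_sub_distrib, ← Finset.mul_sum, ← Finset.mul_sum,
    ← congrFun (eF_eq_sum_lhat hL0), ← lhatPowSum]
  field_simp
  ring

lemma sum_mul_logCorr (hL0 : 0 ∉ L) (y : ℝ) :
    ∑ t ∈ L, (t : ℝ) * lhat lam ε t y * logCorr ε t y
      = -lhatMoment L lam ε y * Real.log y + ε * (lhatPowSum L lam ε y - eF L lam ε y) := by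
  have hterm : ∀ t ∈ L, (t : ℝ) * lhat lam ε t y * logCorr ε t y
      = -Real.log y * ((t : ℝ) * lhat lam ε t y)
        + ε * (lhat lam ε t y * y ^ t - lhat lam ε t y) := by
    intro t ht
    have ht0 : (t : ℝ) ≠ 0 := Nat.cast_ne_zero.2 (ne_of_mem_of_not_mem ht hL0)
    rw [logCorr, lhat]
    field_simp
  rw [Finset.sum_congr rfl hterm, Finset.sum_add_distrib, ← Finset.mul_sum, ← Finset.mul_sum,
    Finset.sum_sub_distrib, congrFun (eF_eq_sum_lhat hL0), lhatMoment, lhatPowSum]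
  ring

/-- Obtained from the ansatz `δ^{l_k,l_s} = k l̂_k s l̂_s (1_{k=s} d_k + h_k + h_s)`, which
decouples the block into scalar linear ODEs for `d_k` and `h_k`; here
`h_k = logCorr ε k / e + vvQ / (2 e²)`. -/
noncomputable def vvSolution (L : Finset ℕ) (lam : ℕ → ℝ) (ε : ℝ) (k s : ℕ) (y : ℝ) : ℝ :=
  (if k = s then k * lhat lam ε k y * (1 - ε * y ^ k) else 0)
    + k * lhat lam ε k y * (s * lhat lam ε s y)
      * (vvQ L lam ε y + eF L lam ε y * (logCorr ε k y + logCorr ε s y)) / eF L lam ε y ^ 2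

lemma vvSolution_one (k s : ℕ) :
    vvSolution L lam ε k s 1 = (if k = s then (1 : ℝ) else 0) * k * lam k * ε * (1 - ε) := by
  simp only [vvSolution, vvQ_one, logCorr_one, lhat, one_pow]
  split_ifs <;> ring

lemma sum_vvSolution (hL0 : 0 ∉ L) {k : ℕ} (hk : k ∈ L) (y : ℝ) :
    ∑ t ∈ L, vvSolution L lam ε k t y
      = k * lhat lam ε k y * (1 - ε * y ^ k)
        + k * lhat lam ε k y * (lhatMoment L lam ε y * vvQ L lam ε y
            + eF L lam ε y * lhatMoment L lam ε y * logCorr ε k y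
            + eF L lam ε y * (-lhatMoment L lam ε y * Real.log y
                + ε * (lhatPowSum L lam ε y - eF L lam ε y))) / eF L lam ε y ^ 2 := by
  have hterm : ∀ t ∈ L,
      k * lhat lam ε k y * (t * lhat lam ε t y)
          * (vvQ L lam ε y + eF L lam ε y * (logCorr ε k y + logCorr ε t y)) / eF L lam ε y ^ 2
        = ((vvQ L lam ε y + eF L lam ε y * logCorr ε k y) * (t * lhat lam ε t y)
            + eF L lam ε y * (t * lhat lam ε t y * logCorr ε t y))
          * (k * lhat lam ε k y / eF L lam ε y ^ 2) := fun t _ => by ring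
  unfold vvSolution
  rw [Finset.sum_add_distrib, Finset.sum_ite_eq, if_pos hk, Finset.sum_congr rfl hterm,
    ← Finset.sum_mul, Finset.sum_add_distrib, ← Finset.mul_sum, ← Finset.mul_sum,
    ← lhatMoment, sum_mul_logCorr hL0]
  ring

lemma hasDerivAt_vvSolution (hL0 : 0 ∉ L) (hlamPos : ∀ t ∈ L, 0 < lam t) (hε : 0 < ε)
    {k s : ℕ} (hk : k ∈ L) (hs : s ∈ L) {y : ℝ} (hy : 0 < y) :
    HasDerivAt (vvSolution L lam ε k s)
      (-(xF L lam ε y) *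
          (((s : ℝ) * lhat lam ε s y / eF L lam ε y ^ 2) * ∑ t ∈ L, vvSolution L lam ε k t y
            + ((k : ℝ) * lhat lam ε k y / eF L lam ε y ^ 2) * ∑ t ∈ L, vvSolution L lam ε s t y
            - (((k : ℝ) + (s : ℝ)) / eF L lam ε y) * vvSolution L lam ε k s y)
        - xF L lam ε y * (k : ℝ) * (s : ℝ) * (lhat lam ε k y / eF L lam ε y) *
            ((if k = s then (1 : ℝ) else 0) - lhat lam ε s y / eF L lam ε y)) y := by
  have hk0 := ne_of_mem_of_not_mem hk hL0
  have hs0 := ne_of_mem_of_not_mem hs hL0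
  have hk' : (k : ℝ) ≠ 0 := Nat.cast_ne_zero.2 hk0
  have hs' : (s : ℝ) ≠ 0 := Nat.cast_ne_zero.2 hs0
  have he := (eF_pos hL0 hlamPos hε hy ⟨k, hk⟩).ne'
  have hmk := (hasDerivAt_lhat (lam := lam) (ε := ε) k hy.ne').const_mul (k : ℝ)
  have hms := (hasDerivAt_lhat (lam := lam) (ε := ε) s hy.ne').const_mul (s : ℝ)
  have hE := hasDerivAt_eF (lam := lam) (ε := ε) hL0 hy.ne'
  have hP := (hasDerivAt_vvQ (lam := lam) (ε := ε) hL0 hy).add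
    (hE.mul ((hasDerivAt_logCorr (ε := ε) hk0 hy).add (hasDerivAt_logCorr (ε := ε) hs0 hy)))
  have hdiag : HasDerivAt (fun y => if k = s then k * lhat lam ε k y * (1 - ε * y ^ k) else 0)
      (if k = s then (k : ℝ) * (k * lhat lam ε k y / y) * (1 - ε * y ^ k)
        + k * lhat lam ε k y * (0 - ε * (k * y ^ k / y)) else 0) y := by
    split_ifs
    · exact hmk.mul ((hasDerivAt_const y 1).sub ((hasDerivAt_pow_div k hy.ne').const_mul ε))
    · exact hasDerivAt_const y 0
  refine (hdiag.add (((hmk.mul hms).mul hP).div (hE.pow 2) (pow_ne_zero 2 he))).congr_deriv ?_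
  rw [xF_eq_eF_div hy.ne', sum_vvSolution hL0 hk, sum_vvSolution hL0 hs]
  simp only [vvSolution, Pi.add_apply, Pi.mul_apply, Pi.pow_apply]
  split_ifs with hks
  · subst hks
    field_simp
    ring
  · field_simp
    ring

lemma CEvv_vvSolution (hL0 : 0 ∉ L) (hlamPos : ∀ t ∈ L, 0 < lam t) (hε : 0 < ε) :
    CEvv L lam ε (vvSolution L lam ε) :=
  ⟨fun _ hk _ hs _ hy => (hasDerivAt_vvSolution hL0 hlamPos hε hk hs hy.1).hasDerivWithinAt,
    fun k _ s _ => vvSolution_one k s⟩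

lemma vvSolution_self_div_sq {k : ℕ} (hk0 : k ≠ 0) (hlam : 0 < lam k) (hε : 0 < ε) {y : ℝ}
    (hy : 0 < y) (he : eF L lam ε y ≠ 0) :
    vvSolution L lam ε k k y / ((k : ℝ) * lhat lam ε k y) ^ 2
      = (1 - ε * y ^ k) / (k * lhat lam ε k y)
        + (vvQ L lam ε y + 2 * eF L lam ε y * logCorr ε k y) / eF L lam ε y ^ 2 := by
  have : (k : ℝ) ≠ 0 := Nat.cast_ne_zero.2 hk0
  have := (lhat_pos hlam hε hy).ne'
  rw [vvSolution, if_pos rfl]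
  field_simp
  ring

end CovarianceEvolution

theorem statement_5_general
    (L : Finset ℕ)
    (hL2 : ∀ k ∈ L, 2 ≤ k)
    (lam : ℕ → ℝ)
    (hlamPos : ∀ k ∈ L, 0 < lam k)
    (ε : ℝ) (hε : ε ∈ Set.Ioo (0 : ℝ) 1)
    (δll : ℕ → ℕ → ℝ → ℝ) (hvv : CEvv L lam ε δll) :
    ∀ k ∈ L, ∀ s ∈ L, ∀ y ∈ Set.Ioc (0 : ℝ) 1,
      δll k k y / ((k : ℝ) * lhat lam ε k y) ^ 2 - δll s s y / ((s : ℝ) * lhat lam ε s y) ^ 2 =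
        -((ε * y ^ k - 1) / ((k : ℝ) * lhat lam ε k y))
        + (ε * y ^ s - 1) / ((s : ℝ) * lhat lam ε s y)
        + (2 * ε / eF L lam ε y) * ((y ^ k - 1) / (k : ℝ) - (y ^ s - 1) / (s : ℝ)) := by
  intro k hk s hs y hy
  have hL0 : 0 ∉ L := fun h => absurd (hL2 0 h) (by norm_num)
  have hk0 := ne_of_mem_of_not_mem hk hL0
  have hs0 := ne_of_mem_of_not_mem hs hL0
  have he := (eF_pos hL0 hlamPos hε.1 hy.1 ⟨k, hk⟩).ne'
  have hsol := CEvv_vvSolution hL0 hlamPos hε.1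
  rw [hvv.unique hL0 hlamPos hε.1 hsol hk hk hy, hvv.unique hL0 hlamPos hε.1 hsol hs hs hy,
    vvSolution_self_div_sq hk0 (hlamPos k hk) hε.1 hy.1 he,
    vvSolution_self_div_sq hs0 (hlamPos s hs) hε.1 hy.1 he, logCorr, logCorr]
  have : (k : ℝ) ≠ 0 := Nat.cast_ne_zero.2 hk0
  have : (s : ℝ) ≠ 0 := Nat.cast_ne_zero.2 hs0
  field_simp
  ring

theorem statement_5
    (L R : Finset ℕ) (hL : L.Nonempty) (hR : R.Nonempty)
    (hL2 : ∀ k ∈ L, 2 ≤ k) (hR2 : ∀ k ∈ R, 2 ≤ k)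
    (lam rho : ℕ → ℝ)
    (hlamPos : ∀ k ∈ L, 0 < lam k) (hlamSum : ∑ k ∈ L, lam k = 1)
    (hrhoPos : ∀ k ∈ R, 0 < rho k) (hrhoSum : ∑ k ∈ R, rho k = 1)
    (ε : ℝ) (hε : ε ∈ Set.Ioo (0 : ℝ) 1)
    (δll : ℕ → ℕ → ℝ → ℝ) (hvv : CEvv L lam ε δll) :
    ∀ k ∈ L, ∀ s ∈ L, ∀ y ∈ Set.Ioc (0 : ℝ) 1,
      δll k k y / ((k : ℝ) * lhat lam ε k y) ^ 2 - δll s s y / ((s : ℝ) * lhat lam ε s y) ^ 2 =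
        -((ε * y ^ k - 1) / ((k : ℝ) * lhat lam ε k y))
        + (ε * y ^ s - 1) / ((s : ℝ) * lhat lam ε s y)
        + (2 * ε / eF L lam ε y) * ((y ^ k - 1) / (k : ℝ) - (y ^ s - 1) / (s : ℝ)) :=
  statement_5_general L hL2 lam hlamPos ε hε δll hvv

end LDPC
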